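/- arXiv:1612.03796 — 6 statements merged into one kernel-verified Lean document; each statement's English description precedes it below -/
import Mathlib

section
/- Let P_1, ..., P_d be d×d permutation matrices such that Δ(P_j* P_i) = 0 whenever i ≠ j. Then for every pair of indices (i, j) with 1 ≤ i, j ≤ d, there exists exactly one k ∈ {1, ..., d} such that the (i, j) entry of P_k is equal to 1; consequently the matrix L = ∑_{k=1}^d k·P_k is a d×d Latin square (each row and each column of L contains each value in {1, ..., d} exactly once). -/
open Matrix

/-- The diagonal truncation map Δ: zeros out off-diagonal entries. -/
def delta {n : Type*} [DecidableEq n] (M : Matrix n n ℂ) : Matrix n n ℂ :=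
  Matrix.diagonal (fun i => M i i)

/-!
For permutation matrices, the diagonal of `P_σᴴ * P_τ = P_{τ σ⁻¹}` records the points where
`σ` and `τ` agree, so the `σ_k` are pairwise nowhere equal. Hence for each `i` the map
`k ↦ σ_k i` is injective, so bijective on a finite set:
every position `(i, j)` is hit by exactly one `σ_k`, and `L i j = k + 1` for that `k`.
-/

open Equiv

namespace Equiv.Perm

theorem existsUnique_apply_eq_of_pairwise_ne {n : Type*} [Finite n] (σ : n → Perm n)
    (hσ : Pairwise fun k l => ∀ i, σ k i ≠ σ l i) (i j : n) : ∃! k, σ k i = j :=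
  have hinj : Function.Injective fun k => σ k i :=
    fun _ _ hkl => by_contra fun hne => hσ hne i hkl
  (Finite.injective_iff_bijective.1 hinj).existsUnique j

variable {n R : Type*} [DecidableEq n]

theorem permMatrix_apply [Zero R] [One R] (σ : Perm n) (i j : n) :
    σ.permMatrix R i j = if σ i = j then 1 else 0 := by
  simp [toPEquiv_apply]

theorem permMatrix_apply_eq_one_iff [Zero R] [One R] [NeZero (1 : R)] (σ : Perm n) (i j : n) :
    σ.permMatrix R i j = 1 ↔ σ i = j := by
  rw [permMatrix_apply]
  simp

variable {ι : Type*} [Fintype ι] [Semiring R]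

theorem sum_smul_permMatrix_apply_of_apply_eq (σ : ι → Perm n) (c : ι → R) {i j : n} {k : ι}
    (hk : σ k i = j) (huniq : ∀ l, σ l i = j → l = k) :
    (∑ l, c l • (σ l).permMatrix R) i j = c k := by
  classical
  have hiff : ∀ l, σ l i = j ↔ l = k := fun l => ⟨huniq l, fun h => h ▸ hk⟩
  simp only [Matrix.sum_apply, Matrix.smul_apply, permMatrix_apply, hiff, smul_eq_mul,
    mul_ite, mul_one, mul_zero]
  exact Fintype.sum_ite_eq' k c

theorem sum_smul_permMatrix_apply_eq_iff (σ : ι → Perm n) {c : ι → R}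
    (hc : Function.Injective c) (hσ : ∀ i j, ∃! k, σ k i = j) (i j : n) (k : ι) :
    (∑ l, c l • (σ l).permMatrix R) i j = c k ↔ σ k i = j := by
  obtain ⟨k', hk', huniq⟩ := hσ i j
  rw [sum_smul_permMatrix_apply_of_apply_eq σ c hk' huniq, hc.eq_iff]
  exact ⟨fun h => h ▸ hk', fun h => (huniq k h).symm⟩

end Equiv.Perm

theorem delta_eq_zero_iff {n : Type*} [DecidableEq n] (M : Matrix n n ℂ) :
    delta M = 0 ↔ ∀ i, M i i = 0 := by
  rw [delta, diagonal_eq_zero, funext_iff]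
  rfl

theorem delta_conjTranspose_permMatrix_mul_eq_zero_iff {n : Type*} [DecidableEq n] [Fintype n]
    (σ τ : Perm n) :
    delta ((σ.permMatrix ℂ)ᴴ * τ.permMatrix ℂ) = 0 ↔ ∀ i, σ i ≠ τ i := by
  rw [conjTranspose_permMatrix, ← permMatrix_mul, delta_eq_zero_iff, σ.surjective.forall]
  simp only [Perm.permMatrix_apply, Perm.mul_apply, Perm.coe_inv, symm_apply_apply,
    ite_eq_right_iff, one_ne_zero, imp_false, ne_comm]

theorem stmt2 (d : ℕ) (P : Fin d → Matrix (Fin d) (Fin d) ℂ)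
    (hP : ∀ k, ∃ σ : Equiv.Perm (Fin d), P k = σ.permMatrix ℂ)
    (horth : ∀ (i j : Fin d), i ≠ j → delta ((P j)ᴴ * P i) = 0)
    (L : Matrix (Fin d) (Fin d) ℂ)
    (hL : L = ∑ k : Fin d, ((k : ℕ) + 1 : ℂ) • P k) :
    (∀ i j : Fin d, ∃! k : Fin d, P k i j = 1) ∧
    (∀ (i : Fin d) (v : Fin d), ∃! j : Fin d, L i j = ((v : ℕ) + 1 : ℂ)) ∧
    (∀ (j : Fin d) (v : Fin d), ∃! i : Fin d, L i j = ((v : ℕ) + 1 : ℂ)) := by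
  choose σ hσ using hP
  obtain rfl : P = fun k => (σ k).permMatrix ℂ := funext hσ
  subst hL
  have hunique : ∀ i j, ∃! k, σ k i = j :=
    Perm.existsUnique_apply_eq_of_pairwise_ne σ fun k l hkl =>
      (delta_conjTranspose_permMatrix_mul_eq_zero_iff _ _).1 (horth l k hkl.symm)
  have hc : Function.Injective fun k : Fin d => ((k : ℕ) + 1 : ℂ) :=
    fun a b h => Fin.ext (Nat.cast_injective (add_right_cancel h))
  have hL := Perm.sum_smul_permMatrix_apply_eq_iff σ hc hunique
  refine ⟨fun i j => ?_, fun i v => ?_, fun j v => ?_⟩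
  · simpa only [Perm.permMatrix_apply_eq_one_iff] using hunique i j
  · simpa only [hL] using existsUnique_eq'
  · simpa only [hL] using (σ v).bijective.existsUnique j
end

section
/- Let U and V be d×d unitary matrices, let D_1, ..., D_n be d×d complex diagonal matrices, and set M_k = U D_k V for each k (so that the M_k have a simultaneous Schmidt decomposition). Then Tr(M_j* M_i) = 0 for all i ≠ j if and only if there exists a d×d unitary matrix A such that Δ(A* M_j* M_i A) = 0 for all i ≠ j. -/
open Matrix

lemma dft_exists (d : ℕ) (hd : d ≠ 0) :
    ∃ F ∈ Matrix.unitaryGroup (Fin d) ℂ,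
      ∀ (X : Matrix (Fin d) (Fin d) ℂ), X.IsDiag → ∀ k,
        (Fᴴ * X * F) k k = X.trace / d := by
  set ζ : ℂ := Complex.exp (2 * Real.pi * Complex.I / d) with hζdef
  have hζ : IsPrimitiveRoot ζ d := Complex.isPrimitiveRoot_exp d hd
  have hζ0 : ζ ≠ 0 := Complex.exp_ne_zero _
  have h1 : (starRingEnd ℂ) ζ = ζ⁻¹ := by
    rw [hζdef, ← Complex.exp_conj, ← Complex.exp_neg]
    congr 1
    simp [map_div₀, _root_.map_mul, Complex.conj_I, Complex.conj_ofReal, map_ofNat]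
    ring
  have hs : ((Real.sqrt d : ℝ) : ℂ) * ((Real.sqrt d : ℝ) : ℂ) = (d : ℂ) := by
    rw [← Complex.ofReal_mul, Real.mul_self_sqrt (by positivity)]
    simp
  have hdC : (d : ℂ) ≠ 0 := Nat.cast_ne_zero.mpr hd
  set F : Matrix (Fin d) (Fin d) ℂ :=
    Matrix.of (fun m k : Fin d => ζ ^ ((m : ℕ) * (k : ℕ)) / ((Real.sqrt d : ℝ) : ℂ)) with hF
  have key : ∀ (i j m : Fin d),
      (starRingEnd ℂ) (F m i) * F m j
        = (ζ ^ ((j : ℤ) - (i : ℤ))) ^ (m : ℕ) / d := by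
    intro i j m
    have step1 : (starRingEnd ℂ) (F m i) * F m j
        = (ζ ^ (-(((m : ℕ) * (i : ℕ) : ℕ) : ℤ)) * ζ ^ ((((m : ℕ) * (j : ℕ) : ℕ) : ℤ)))
          / (((Real.sqrt d : ℝ) : ℂ) * ((Real.sqrt d : ℝ) : ℂ)) := by
      simp only [hF, Matrix.of_apply, map_div₀, map_pow, h1, Complex.conj_ofReal, inv_pow,
        _root_.zpow_neg, zpow_natCast]
      field_simp
    rw [step1, hs, ← zpow_add₀ hζ0]
    congr 1
    have harith : (-(((m : ℕ) * (i : ℕ) : ℕ) : ℤ) + (((m : ℕ) * (j : ℕ) : ℕ) : ℤ))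
        = ((j : ℤ) - (i : ℤ)) * (m : ℕ) := by push_cast; ring
    rw [harith, _root_.zpow_mul, zpow_natCast]
  have hFu : F ∈ Matrix.unitaryGroup (Fin d) ℂ := by
    rw [Matrix.mem_unitaryGroup_iff']
    ext i j
    have hentry : (star F * F) i j = ∑ m : Fin d, (starRingEnd ℂ) (F m i) * F m j := by
      simp [Matrix.mul_apply, Matrix.conjTranspose_apply, Matrix.star_apply]
    rw [hentry]
    simp only [key]
    rw [← Finset.sum_div]
    by_cases hij : i = j
    · subst hij
      simp [Matrix.one_apply, Finset.card_univ, div_self hdC]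
    · have hz1 : ζ ^ ((j : ℤ) - (i : ℤ)) ≠ 1 := by
        intro hcon
        rw [hζ.zpow_eq_one_iff_dvd] at hcon
        have h0 := Int.eq_zero_of_abs_lt_dvd hcon (by
          have hi := i.isLt; have hj := j.isLt
          rw [abs_lt]; omega)
        exact hij (Fin.ext (by omega))
      have hzd : (ζ ^ ((j : ℤ) - (i : ℤ))) ^ d = 1 := by
        rw [← _root_.zpow_natCast (ζ ^ ((j : ℤ) - (i : ℤ))) d, ← _root_.zpow_mul, mul_comm,
          _root_.zpow_mul, _root_.zpow_natCast, hζ.pow_eq_one, _root_.one_zpow]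
      rw [Fin.sum_univ_eq_sum_range (fun m => (ζ ^ ((j : ℤ) - (i : ℤ))) ^ m)]
      rw [geom_sum_eq hz1, hzd]
      simp [Matrix.one_apply, hij]
  refine ⟨F, hFu, ?_⟩
  intro X hX k
  rw [← hX.diagonal_diag]
  have hdd : (Fᴴ * Matrix.diagonal X.diag * F) k k
      = ∑ a : Fin d, X.diag a * ((starRingEnd ℂ) (F a k) * F a k) := by
    rw [Matrix.mul_assoc, Matrix.mul_apply]
    simp only [Matrix.diagonal_mul, Matrix.conjTranspose_apply]
    refine Finset.sum_congr rfl (fun a _ => ?_)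
    simp [Matrix.star_apply]
    ring
  rw [hdd]
  have hone : ∀ a : Fin d, (starRingEnd ℂ) (F a k) * F a k = 1 / d := by
    intro a
    rw [key k k a]
    simp
  simp only [hone]
  rw [Matrix.trace]
  simp only [Matrix.diag_diagonal, Finset.sum_div]
  exact Finset.sum_congr rfl (fun a _ => by ring)

theorem stmt3 (d n : ℕ) (U V : Matrix (Fin d) (Fin d) ℂ)
    (hU : U ∈ Matrix.unitaryGroup (Fin d) ℂ) (hV : V ∈ Matrix.unitaryGroup (Fin d) ℂ)
    (D : Fin n → Matrix (Fin d) (Fin d) ℂ) (hD : ∀ k, (D k).IsDiag)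
    (M : Fin n → Matrix (Fin d) (Fin d) ℂ) (hM : ∀ k, M k = U * D k * V) :
    (∀ (i j : Fin n), i ≠ j → Matrix.trace ((M j)ᴴ * M i) = 0)
    ↔
    (∃ A ∈ Matrix.unitaryGroup (Fin d) ℂ,
      ∀ (i j : Fin n), i ≠ j → delta (Aᴴ * (M j)ᴴ * M i * A) = 0) := by
  constructor
  · intro htr
    rcases Nat.eq_zero_or_pos d with hd | hd
    · subst hd
      exact ⟨1, Submonoid.one_mem _, fun i j _ => Subsingleton.elim _ _⟩
    obtain ⟨F, hFu, hFdiag⟩ := dft_exists d hd.ne'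
    refine ⟨Vᴴ * F, mul_mem (Unitary.star_mem hV) hFu, ?_⟩
    intro i j hij
    have hVV : V * Vᴴ = 1 := Matrix.mem_unitaryGroup_iff.mp hV
    have hUU : Uᴴ * U = 1 := Matrix.mem_unitaryGroup_iff'.mp hU
    have hUc : ∀ X : Matrix (Fin d) (Fin d) ℂ, Uᴴ * (U * X) = X := fun X => by
      rw [← Matrix.mul_assoc, hUU, Matrix.one_mul]
    have hVc : ∀ X : Matrix (Fin d) (Fin d) ℂ, V * (Vᴴ * X) = X := fun X => by
      rw [← Matrix.mul_assoc, hVV, Matrix.one_mul]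
    have hMM : (M j)ᴴ * M i = Vᴴ * ((D j)ᴴ * (D i * V)) := by
      simp only [hM, Matrix.conjTranspose_mul, Matrix.mul_assoc, hUc]
    have hconj : (Vᴴ * F)ᴴ * (M j)ᴴ * M i * (Vᴴ * F) = Fᴴ * ((D j)ᴴ * D i) * F := by
      simp only [hM, Matrix.conjTranspose_mul, Matrix.conjTranspose_conjTranspose,
        Matrix.mul_assoc, hUc, hVc]
    have hDdiag : ((D j)ᴴ * D i).IsDiag := by
      intro a b hab
      rw [Matrix.mul_apply]
      apply Finset.sum_eq_zero
      intro c _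
      rcases eq_or_ne c a with rfl | hca
      · rw [hD i hab, mul_zero]
      · rw [Matrix.conjTranspose_apply, hD j hca]
        simp
    have htr0 : ((D j)ᴴ * D i).trace = 0 := by
      have h := htr i j hij
      rw [hMM, Matrix.trace_mul_comm] at h
      simp only [Matrix.mul_assoc] at h
      rw [hVV, Matrix.mul_one] at h
      simpa [Matrix.mul_assoc] using h
    ext a b
    rcases eq_or_ne a b with rfl | hab
    · simp only [delta, Matrix.diagonal_apply_eq, Matrix.zero_apply]
      rw [hconj, hFdiag _ hDdiag, htr0]
      simp
    · simp [delta, Matrix.diagonal_apply_ne _ hab]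
  · rintro ⟨A, hA, hdiag⟩ i j hij
    have hAA : A * Aᴴ = 1 := Matrix.mem_unitaryGroup_iff.mp hA
    have h1 : (Aᴴ * (M j)ᴴ * M i * A).trace = ((M j)ᴴ * M i).trace := by
      rw [Matrix.trace_mul_cycle, ← Matrix.mul_assoc, hAA,
        Matrix.one_mul]
    rw [Matrix.trace] at h1
    rw [← h1]
    apply Finset.sum_eq_zero
    intro k _
    have hk := congrFun (congrFun (hdiag i j hij) k) k
    simp only [delta, Matrix.diagonal_apply_eq, Matrix.zero_apply] at hk
    exact hk
end

section
/- (Fillmore) Let M be a d×d complex matrix with Tr(M) = 0. Then there exists a d×d unitary matrix V such that Δ(V* M V) = 0, i.e., every diagonal entry of V* M V is zero. -/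
open Matrix

open Complex ComplexConjugate Finset

/-!
If `u, w` are orthonormal, every point of the segment between `u* A u` and `w* A w` is a value
`v* A v` at a unit vector `v` in their span (Toeplitz–Hausdorff). After an affine change of `A`
the endpoints are `1` and `-s ≤ 0`; a phase `ζ` on `w` makes the value at `x u + ζ w` (`x` real)
the real quadratic `x ^ 2 + r x - s`, which has a root. Adding the basis vectors one at a time,
some unit vector `v` attains the mean `tr A / d = 0` of the diagonal. In a unitary basis
containing `v` the corresponding diagonal entry vanishes and the complementary block still has
trace zero, so induction on `d` finishes.
-/

namespace Matrix

variable {n : Type*} [Fintype n]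

lemma star_smul_add_smul_dotProduct_mulVec (A : Matrix n n ℂ) (u w : n → ℂ) (x y : ℂ) :
    star (x • u + y • w) ⬝ᵥ (A *ᵥ (x • u + y • w)) =
      conj x * x * (star u ⬝ᵥ (A *ᵥ u)) + conj x * y * (star u ⬝ᵥ (A *ᵥ w))
        + conj y * x * (star w ⬝ᵥ (A *ᵥ u)) + conj y * y * (star w ⬝ᵥ (A *ᵥ w)) := by
  simp only [mulVec_add, mulVec_smul, star_add, star_smul, dotProduct_add, add_dotProduct,
    dotProduct_smul, smul_dotProduct, smul_eq_mul, RCLike.star_def]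
  ring

lemma star_smul_add_smul_dotProduct_self {u w : n → ℂ} (huu : star u ⬝ᵥ u = 1)
    (hww : star w ⬝ᵥ w = 1) (huw : star u ⬝ᵥ w = 0) (x y : ℂ) :
    star (x • u + y • w) ⬝ᵥ (x • u + y • w) = conj x * x + conj y * y := by
  have hwu : star w ⬝ᵥ u = 0 := by rw [star_dotProduct, huw, star_zero]
  classical
  simpa [huu, hww, huw, hwu] using star_smul_add_smul_dotProduct_mulVec 1 u w x y

lemma exists_unit_dotProduct_mulVec_eq_zero {A : Matrix n n ℂ} {u w : n → ℂ}
    (huu : star u ⬝ᵥ u = 1) (hww : star w ⬝ᵥ w = 1) (huw : star u ⬝ᵥ w = 0) {s : ℝ}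
    (hs : 0 ≤ s) (hAu : star u ⬝ᵥ (A *ᵥ u) = 1) (hAw : star w ⬝ᵥ (A *ᵥ w) = -s) :
    ∃ x y : ℂ, star (x • u + y • w) ⬝ᵥ (x • u + y • w) = 1 ∧
      star (x • u + y • w) ⬝ᵥ (A *ᵥ (x • u + y • w)) = 0 := by
  set b := star u ⬝ᵥ (A *ᵥ w)
  set c := star w ⬝ᵥ (A *ᵥ u)
  -- a phase `ζ` on `w` makes the cross term `ζ b + conj ζ c` real
  obtain ⟨ζ, hζ, hζz⟩ := Complex.exists_norm_eq_mul_self (b - conj c)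
  have hζζ : conj ζ * ζ = 1 := by rw [conj_mul', hζ]; norm_num
  set r := (ζ * b + conj ζ * c).re
  have hr : ζ * b + conj ζ * c = r := by
    refine (conj_eq_iff_re.mp ?_).symm
    have := congrArg conj hζz
    simp only [map_add, map_sub, map_mul, conj_conj, conj_ofReal] at this ⊢
    linear_combination hζz - this
  -- the value at `x₀ u + ζ w` is `x₀ ^ 2 + r x₀ - s`: take a root and normalise
  set x₀ := (√(r ^ 2 + 4 * s) - r) / 2
  have hx₀ : x₀ ^ 2 + r * x₀ - s = 0 := by
    have := Real.sq_sqrt (by positivity : 0 ≤ r ^ 2 + 4 * s)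
    linear_combination this / 4
  set k := (√(x₀ ^ 2 + 1))⁻¹
  have hk : k ^ 2 * (x₀ ^ 2 + 1) = 1 := by
    rw [inv_pow, Real.sq_sqrt (by positivity), inv_mul_cancel₀ (by positivity)]
  have hk' : (k : ℂ) ^ 2 * (x₀ ^ 2 + 1) = 1 := by exact_mod_cast hk
  have hx₀' : (x₀ : ℂ) ^ 2 + r * x₀ - s = 0 := by exact_mod_cast hx₀
  refine ⟨(k * x₀ : ℝ), k * ζ, ?_, ?_⟩
  · rw [star_smul_add_smul_dotProduct_self huu hww huw]
    simp only [map_mul, conj_ofReal]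
    push_cast
    linear_combination hk' + k ^ 2 * hζζ
  · rw [star_smul_add_smul_dotProduct_mulVec, hAu, hAw]
    simp only [map_mul, conj_ofReal]
    push_cast
    linear_combination (k : ℂ) ^ 2 * hx₀' + k ^ 2 * x₀ * hr - k ^ 2 * s * hζζ

lemma star_dotProduct_smul_sub_smul_one_mulVec [DecidableEq n] (A : Matrix n n ℂ) (a γ : ℂ)
    (v : n → ℂ) :
    star v ⬝ᵥ ((a • (A - γ • 1)) *ᵥ v) =
      a * (star v ⬝ᵥ (A *ᵥ v) - γ * (star v ⬝ᵥ v)) := by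
  simp only [smul_mulVec, sub_mulVec, one_mulVec, dotProduct_smul, dotProduct_sub,
    smul_eq_mul]

lemma exists_unit_dotProduct_mulVec_eq_convex_comb (A : Matrix n n ℂ) {u w : n → ℂ}
    (huu : star u ⬝ᵥ u = 1) (hww : star w ⬝ᵥ w = 1) (huw : star u ⬝ᵥ w = 0) {t : ℝ}
    (ht₀ : 0 ≤ t) (ht₁ : t ≤ 1) :
    ∃ x y : ℂ, star (x • u + y • w) ⬝ᵥ (x • u + y • w) = 1 ∧
      star (x • u + y • w) ⬝ᵥ (A *ᵥ (x • u + y • w)) =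
        t * (star u ⬝ᵥ (A *ᵥ u)) + (1 - t) * (star w ⬝ᵥ (A *ᵥ w)) := by
  classical
  set α := star u ⬝ᵥ (A *ᵥ u)
  set β := star w ⬝ᵥ (A *ᵥ w)
  set γ := t * α + (1 - t) * β
  by_cases hαγ : α = γ
  · exact ⟨1, 0, by simp [huu], by simp [← hαγ, α]⟩
  have ht : t ≠ 1 := by rintro rfl; simp [γ] at hαγ
  have ht' : (1 - t : ℂ) ≠ 0 := by exact_mod_cast sub_ne_zero.mpr ht.symm
  -- rescale `A - γ` so that its values at `u` and `w` are `1` and `-t / (1 - t) ≤ 0`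
  set B := (α - γ)⁻¹ • (A - γ • 1)
  have hB v : star v ⬝ᵥ (B *ᵥ v) =
      (α - γ)⁻¹ * (star v ⬝ᵥ (A *ᵥ v) - γ * (star v ⬝ᵥ v)) :=
    star_dotProduct_smul_sub_smul_one_mulVec A _ γ v
  have hBu : star u ⬝ᵥ (B *ᵥ u) = 1 := by
    rw [hB, huu, mul_one, inv_mul_cancel₀ (sub_ne_zero.mpr hαγ)]
  have hBw : star w ⬝ᵥ (B *ᵥ w) = -(t / (1 - t) : ℝ) := by
    rw [hB, hww, mul_one, inv_mul_eq_iff_eq_mul₀ (sub_ne_zero.mpr hαγ)]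
    push_cast
    field_simp
    ring
  obtain ⟨x, y, hnorm, hval⟩ := exists_unit_dotProduct_mulVec_eq_zero huu hww huw
    (div_nonneg ht₀ (sub_nonneg.mpr ht₁)) hBu hBw
  refine ⟨x, y, hnorm, ?_⟩
  rw [hB, hnorm, mul_one, mul_eq_zero, inv_eq_zero, sub_eq_zero, sub_eq_zero] at hval
  exact hval.resolve_left hαγ

lemma conjTranspose_mul_mul_apply (U A : Matrix n n ℂ) (i j : n) :
    (Uᴴ * A * U) i j = star (U.col i) ⬝ᵥ (A *ᵥ U.col j) := by
  rw [mul_assoc, mul_apply, dotProduct]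
  rfl

variable [DecidableEq n]

lemma exists_unit_support_dotProduct_mulVec_eq_average (A : Matrix n n ℂ) {s : Finset n}
    (hs : s.Nonempty) :
    ∃ v : n → ℂ, (∀ i ∉ s, v i = 0) ∧ star v ⬝ᵥ v = 1 ∧
      star v ⬝ᵥ (A *ᵥ v) = (∑ i ∈ s, A i i) / #s := by
  induction hs using Finset.Nonempty.cons_induction with
  | singleton j =>
    exact ⟨Pi.single j 1, fun i hi => Pi.single_eq_of_ne (by simpa using hi) _, by simp,
      by simp⟩
  | cons j s hj hs ih =>
    obtain ⟨v, hv_supp, hv_norm, hv_val⟩ := ih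
    have hvj : star v ⬝ᵥ Pi.single j 1 = 0 := by simp [hv_supp j hj]
    have hk : (#s : ℂ) ≠ 0 := by exact_mod_cast hs.card_pos.ne'
    obtain ⟨x, y, hnorm, hval⟩ := exists_unit_dotProduct_mulVec_eq_convex_comb A hv_norm
      (by simp) hvj (t := #s / (#s + 1)) (by positivity)
      (div_le_one_of_le₀ (by linarith) (by positivity))
    refine ⟨x • v + y • Pi.single j 1, fun i hi => ?_, hnorm, ?_⟩
    · rw [Finset.mem_cons, not_or] at hi
      simp [hv_supp i hi.2, Pi.single_eq_of_ne hi.1]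
    · rw [hval, hv_val, Finset.sum_cons, Finset.card_cons]
      simp only [ofReal_div, ofReal_natCast, ofReal_add, ofReal_one, Pi.star_single, star_one,
        mulVec_single_one, single_one_dotProduct, col_apply, Nat.cast_add, Nat.cast_one]
      field_simp
      ring

lemma exists_unit_dotProduct_mulVec_eq_zero_of_trace_eq_zero [Nonempty n]
    {A : Matrix n n ℂ} (hA : A.trace = 0) :
    ∃ v : n → ℂ, star v ⬝ᵥ v = 1 ∧ star v ⬝ᵥ (A *ᵥ v) = 0 := by
  obtain ⟨v, -, hv_norm, hv_val⟩ :=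
    exists_unit_support_dotProduct_mulVec_eq_average A univ_nonempty
  exact ⟨v, hv_norm, by rw [hv_val, show ∑ i, A i i = 0 from hA, zero_div]⟩

lemma exists_mem_unitaryGroup_col_eq {v : n → ℂ} (hv : star v ⬝ᵥ v = 1) (j : n) :
    ∃ U ∈ unitaryGroup n ℂ, U.col j = v := by
  have hv' : Orthonormal ℂ
      (({j} : Set n).domRestrict fun _ => (WithLp.toLp 2 v : EuclideanSpace ℂ n)) := by
    rw [orthonormal_iff_ite]
    rintro ⟨i, rfl⟩ ⟨k, rfl⟩
    rw [if_pos rfl, Set.domRestrict_apply, EuclideanSpace.inner_eq_star_dotProduct,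
      dotProduct_comm]
    exact hv
  obtain ⟨b, hb⟩ := hv'.exists_orthonormalBasis_extension_of_card_eq (by simp)
  set e := EuclideanSpace.basisFun n ℂ
  refine ⟨e.toBasis.toMatrix b, e.toMatrix_orthonormalBasis_mem_unitary b, ?_⟩
  ext i
  simp [e, Module.Basis.toMatrix_apply, hb j rfl]

lemma trace_conjTranspose_mul_mul {U : Matrix n n ℂ} (hU : U ∈ unitaryGroup n ℂ)
    (A : Matrix n n ℂ) : (Uᴴ * A * U).trace = A.trace := by
  have hUU : U * Uᴴ = 1 := mem_unitaryGroup_iff.mp hU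
  rw [trace_mul_cycle, hUU, one_mul]

lemma fromBlocks_mem_unitaryGroup {m : Type*} [Fintype m] [DecidableEq m] {U : Matrix n n ℂ}
    {V : Matrix m m ℂ} (hU : U ∈ unitaryGroup n ℂ) (hV : V ∈ unitaryGroup m ℂ) :
    fromBlocks U 0 0 V ∈ unitaryGroup (n ⊕ m) ℂ := by
  have hUU : Uᴴ * U = 1 := mem_unitaryGroup_iff'.mp hU
  have hVV : Vᴴ * V = 1 := mem_unitaryGroup_iff'.mp hV
  rw [mem_unitaryGroup_iff', star_eq_conjTranspose, fromBlocks_conjTranspose,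
    fromBlocks_multiply]
  simp [hUU, hVV]

def IsUnitarilyZeroDiagonal (M : Matrix n n ℂ) : Prop :=
  ∃ V ∈ unitaryGroup n ℂ, (Vᴴ * M * V).diag = 0

lemma IsUnitarilyZeroDiagonal.of_submatrix_equiv {m : Type*} [Fintype m] [DecidableEq m]
    {M : Matrix n n ℂ} (e : m ≃ n) (h : (M.submatrix e e).IsUnitarilyZeroDiagonal) :
    M.IsUnitarilyZeroDiagonal := by
  obtain ⟨V, hV, hdiag⟩ := h
  refine ⟨V.submatrix e.symm e.symm, ?_, ?_⟩
  · have hVV : Vᴴ * V = 1 := mem_unitaryGroup_iff'.mp hV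
    rw [mem_unitaryGroup_iff', star_eq_conjTranspose, conjTranspose_submatrix,
      submatrix_mul_equiv, hVV, submatrix_one_equiv]
  · have hM : M = (M.submatrix e e).submatrix e.symm e.symm := by simp
    rw [hM, conjTranspose_submatrix, submatrix_mul_equiv, submatrix_mul_equiv, diag_submatrix,
      hdiag]
    rfl

lemma isUnitarilyZeroDiagonal_sum_unit {m : Type*} [Fintype m] [DecidableEq m]
    (ih : ∀ N : Matrix m m ℂ, N.trace = 0 → N.IsUnitarilyZeroDiagonal)
    {A : Matrix (m ⊕ Unit) (m ⊕ Unit) ℂ} (hA : A.trace = 0) : A.IsUnitarilyZeroDiagonal := by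
  obtain ⟨v, hv_norm, hv_val⟩ := exists_unit_dotProduct_mulVec_eq_zero_of_trace_eq_zero hA
  obtain ⟨U, hU, hUv⟩ := exists_mem_unitaryGroup_col_eq hv_norm (.inr ())
  have hA'_last : (Uᴴ * A * U) (.inr ()) (.inr ()) = 0 := by
    rw [conjTranspose_mul_mul_apply, hUv, hv_val]
  set A' := Uᴴ * A * U
  have hN : A'.toBlocks₁₁.trace = 0 := by
    have hA' : A'.trace = 0 := by rw [trace_conjTranspose_mul_mul hU, hA]
    simpa [trace, toBlocks₁₁, Fintype.sum_sum_type, hA'_last] using hA'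
  obtain ⟨W, hW, hWN⟩ := ih _ hN
  refine ⟨U * fromBlocks W 0 0 1, mul_mem hU (fromBlocks_mem_unitaryGroup hW (one_mem _)), ?_⟩
  have hconj : (U * fromBlocks W 0 0 1)ᴴ * A * (U * fromBlocks W 0 0 1) =
      fromBlocks (Wᴴ * A'.toBlocks₁₁ * W) (Wᴴ * A'.toBlocks₁₂) (A'.toBlocks₂₁ * W)
        A'.toBlocks₂₂ := by
    calc (U * fromBlocks W 0 0 1)ᴴ * A * (U * fromBlocks W 0 0 1)
        = (fromBlocks W 0 0 1)ᴴ * A' * fromBlocks W 0 0 1 := by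
          simp only [A', conjTranspose_mul, Matrix.mul_assoc]
      _ = _ := by
          conv_lhs => rw [← fromBlocks_toBlocks A']
          simp [fromBlocks_conjTranspose, fromBlocks_multiply]
  rw [hconj]
  ext (i | i)
  · simpa using congrFun hWN i
  · simpa [toBlocks₂₂] using hA'_last

theorem isUnitarilyZeroDiagonal_of_trace_eq_zero :
    ∀ {d : ℕ} {M : Matrix (Fin d) (Fin d) ℂ}, M.trace = 0 → M.IsUnitarilyZeroDiagonal
  | 0, _, _ => ⟨1, one_mem _, Subsingleton.elim _ _⟩
  | d + 1, M, hM => by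
    let e : Fin d ⊕ Unit ≃ Fin (d + 1) :=
      ((finSuccEquiv d).trans (Equiv.optionEquivSumPUnit _)).symm
    refine .of_submatrix_equiv e
      (isUnitarilyZeroDiagonal_sum_unit (fun _ => isUnitarilyZeroDiagonal_of_trace_eq_zero) ?_)
    rw [← hM, trace, trace]
    exact e.sum_comp fun i => M i i

end Matrix

/-- Fillmore's theorem: any trace-zero matrix is unitarily equivalent to a matrix
with zero diagonal. -/
theorem stmt5 (d : ℕ) (M : Matrix (Fin d) (Fin d) ℂ) (hM : Matrix.trace M = 0) :
    ∃ V ∈ Matrix.unitaryGroup (Fin d) ℂ, delta (Vᴴ * M * V) = 0 := by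
  obtain ⟨V, hV, hdiag⟩ := isUnitarilyZeroDiagonal_of_trace_eq_zero hM
  exact ⟨V, hV, diagonal_eq_zero.mpr hdiag⟩
end

section
/- Let I be a finite index set and let (k_i)_{i∈I} and (n_i)_{i∈I} be families of positive integers. Consider vectors ψ = (ψ_i)_{i∈I} where each ψ_i ∈ ℂ^{k_i} ⊗ ℂ^{n_i}, and operators of the form ⊕_{i∈I} (I_{k_i} ⊗ A_i) where each A_i is an n_i×n_i complex matrix. Then there exists a vector ψ such that for every family (A_i)_{i∈I}, if (I_{k_i} ⊗ A_i)ψ_i = 0 for all i ∈ I then A_i = 0 for all i ∈ I, if and only if k_i ≥ n_i for all i ∈ I. (That is, the C*-algebra ⊕_i (I_{k_i} ⊗ M_{n_i}) has a separating vector if and only if k_i ≥ n_i for all i.) -/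
open Matrix Kronecker

/- Writing `ψ = vec X` for an `n × k` matrix `X` turns `(I_k ⊗ A) ψ` into `vec (A X)`, so `ψ` is
separating for `I_k ⊗ Mₙ` exactly when `X` has no nonzero left annihilator, i.e. when the rows of
`X` are linearly independent in `ℂ^k`; this is possible if and only if `n ≤ k`. Because the
operators act blockwise, a family is separating for the direct sum iff each block is. -/

theorem exists_forall_imp_forall_eq_zero_pi_iff {ι : Type*} {X Y : ι → Type*}
    [∀ i, Zero (Y i)] (P : ∀ i, X i → Y i → Prop) (hP : ∀ i x, P i x 0) :
    (∃ x : ∀ i, X i, ∀ y : ∀ i, Y i, (∀ i, P i (x i) (y i)) → ∀ i, y i = 0) ↔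
      ∀ i, ∃ x : X i, ∀ y : Y i, P i x y → y = 0 := by
  classical
  constructor
  · rintro ⟨x, hx⟩ i
    refine ⟨x i, fun y hy => ?_⟩
    have hsingle : ∀ j, P j (x j) (Pi.single i y j) := by
      intro j
      rcases eq_or_ne j i with rfl | hj
      · simpa using hy
      · simpa [Pi.single_eq_of_ne hj] using hP j (x j)
    simpa using hx (Pi.single i y) hsingle i
  · intro h
    choose x hx using h
    exact ⟨x, fun y hy i => hx i (y i) (hy i)⟩

namespace Matrix

variable {m n : Type*} [Fintype m] [Fintype n]

theorem card_le_card_of_forall_mul_eq_zero {K : Type*} [Field K] (X : Matrix n m K)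
    (hX : ∀ A : Matrix n n K, A * X = 0 → A = 0) : Fintype.card n ≤ Fintype.card m := by
  have hinj : Function.Injective X.vecMulLinear := by
    refine (injective_iff_map_eq_zero _).2 fun v hv => ?_
    have hrow : replicateRow n v = 0 := hX _ (by
      rw [← replicateRow_vecMul]
      simpa using congrArg (replicateRow n) hv)
    ext j
    simpa using congr_fun₂ hrow j j
  simpa only [Module.finrank_fintype_fun_eq_card] using
    LinearMap.finrank_le_finrank_of_injective hinj

theorem exists_forall_mul_eq_zero_of_card_le {R : Type*} [Semiring R]
    (h : Fintype.card n ≤ Fintype.card m) :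
    ∃ X : Matrix n m R, ∀ A : Matrix n n R, A * X = 0 → A = 0 := by
  classical
  obtain ⟨e⟩ := Function.Embedding.nonempty_of_card_le h
  let X : Matrix n m R := (1 : Matrix m m R).submatrix e id
  have hX : X * (1 : Matrix m m R).submatrix id e = 1 := by
    rw [← submatrix_mul _ _ _ _ _ Function.bijective_id, Matrix.one_mul,
      submatrix_one _ e.injective]
  refine ⟨X, fun A hA => ?_⟩
  rw [← A.mul_one, ← hX, ← Matrix.mul_assoc, hA, Matrix.zero_mul]

theorem exists_separating_one_kronecker_iff {K : Type*} [Field K] [DecidableEq m] :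
    (∃ ψ : m × n → K, ∀ A : Matrix n n K, ((1 : Matrix m m K) ⊗ₖ A) *ᵥ ψ = 0 → A = 0) ↔
      Fintype.card n ≤ Fintype.card m := by
  rw [vec_bijective.surjective.exists]
  simp_rw [← vec_mul_eq_mulVec, ← vec_zero, vec_inj]
  exact ⟨fun ⟨X, hX⟩ => card_le_card_of_forall_mul_eq_zero X hX,
    exists_forall_mul_eq_zero_of_card_le⟩

end Matrix

theorem stmt7_general (I : Type*) (k n : I → ℕ) :
    (∃ ψ : ∀ i : I, (Fin (k i) × Fin (n i)) → ℂ,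
      ∀ A : ∀ i : I, Matrix (Fin (n i)) (Fin (n i)) ℂ,
        (∀ i, (((1 : Matrix (Fin (k i)) (Fin (k i)) ℂ) ⊗ₖ A i).mulVec (ψ i)) = 0) →
        ∀ i, A i = 0)
    ↔ ∀ i, n i ≤ k i := by
  rw [exists_forall_imp_forall_eq_zero_pi_iff
    (fun i ψ A => ((1 : Matrix (Fin (k i)) (Fin (k i)) ℂ) ⊗ₖ A) *ᵥ ψ = 0) (by simp)]
  refine forall_congr' fun i => ?_
  simpa only [Fintype.card_fin] using
    exists_separating_one_kronecker_iff (m := Fin (k i)) (n := Fin (n i)) (K := ℂ)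

theorem stmt7 (I : Type*) [Fintype I] (k n : I → ℕ)
    (hk : ∀ i, 0 < k i) (hn : ∀ i, 0 < n i) :
    (∃ ψ : ∀ i : I, (Fin (k i) × Fin (n i)) → ℂ,
      ∀ A : ∀ i : I, Matrix (Fin (n i)) (Fin (n i)) ℂ,
        (∀ i, (((1 : Matrix (Fin (k i)) (Fin (k i)) ℂ) ⊗ₖ A i).mulVec (ψ i)) = 0) →
        ∀ i, A i = 0)
    ↔ ∀ i, n i ≤ k i :=
  stmt7_general I k n
end

section
/- Let U_1, ..., U_d be d×d unitary matrices with Tr(U_j* U_i) = 0 for all i ≠ j, and suppose there exist a positive integer r and a d×r complex matrix W with W W* = I_d such that for all i ≠ j every diagonal entry of W* U_j* U_i W is zero. Let S be the linear span of {U_j* U_i : 1 ≤ i, j ≤ d}. If dim S = d, then S is closed under matrix multiplication (hence, being also closed under conjugate transpose and containing the identity, is a C*-algebra) and S has a separating vector. -/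
/-!
Trace orthogonality makes each family `i ↦ U_lᴴ U_i` linearly independent, so the dimension
hypothesis forces every such family to span `S`. Hence `U_jᴴ U_i · B`, with `B` written in the
basis `U_iᴴ U_m`, is a combination of the `U_jᴴ U_m`, which gives closure under products. For a
nonzero column `w` of `W`, the diagonal condition says the vectors `U_i w` are pairwise orthogonal,
hence independent; writing `A = U_lᴴ ∑ c_i U_i`, `A w = 0` forces all `c_i = 0`.
-/

open Matrix Submodule

theorem LinearIndependent.of_pairwise_dual_eq_zero {K M ι : Type*} [Field K] [AddCommGroup M]
    [Module K M] (v : ι → M) (f : ι → Module.Dual K M) (h0 : Pairwise fun i j ↦ f i (v j) = 0)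
    (hne : ∀ i, f i (v i) ≠ 0) : LinearIndependent K v :=
  .of_pairwise_dual_eq_zero_one v (fun i ↦ (f i (v i))⁻¹ • f i)
    (fun i j hij ↦ by simp [h0 hij]) (fun i ↦ by simp [hne i])

namespace Matrix

section Field

variable {ι n 𝕜 : Type*} [Fintype n] [Field 𝕜] [StarRing 𝕜]

theorem conjTranspose_mul_conjTranspose_mul_mul_apply_self {m : Type*} (W : Matrix n m 𝕜)
    (A B : Matrix n n 𝕜) (k : m) :
    (Wᴴ * Aᴴ * B * W) k k = star (A *ᵥ Wᵀ k) ⬝ᵥ (B *ᵥ Wᵀ k) := by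
  rw [← conjTranspose_mul, Matrix.mul_assoc, mul_apply']
  rfl

variable [DecidableEq n] {U : ι → Matrix n n 𝕜}

theorem mul_conjTranspose_mul_of_mem_unitaryGroup {V : Matrix n n 𝕜} (hV : V ∈ unitaryGroup n 𝕜)
    (A B : Matrix n n 𝕜) : A * V * (Vᴴ * B) = A * B := by
  rw [mul_assoc, ← mul_assoc V, ← star_eq_conjTranspose, mem_unitaryGroup_iff.1 hV, one_mul]

theorem linearIndependent_conjTranspose_mul [CharZero 𝕜] [Nonempty n]
    (hU : ∀ i, U i ∈ unitaryGroup n 𝕜) (horth : Pairwise fun i j ↦ trace ((U j)ᴴ * U i) = 0)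
    (l : ι) : LinearIndependent 𝕜 fun i ↦ (U l)ᴴ * U i := by
  have hf (m i : ι) : (traceLinearMap n 𝕜 𝕜 ∘ₗ LinearMap.mulLeft 𝕜 ((U m)ᴴ * U l)) ((U l)ᴴ * U i)
      = trace ((U m)ᴴ * U i) := by
    rw [LinearMap.comp_apply, LinearMap.mulLeft_apply, traceLinearMap_apply,
      mul_conjTranspose_mul_of_mem_unitaryGroup (hU l)]
  refine .of_pairwise_dual_eq_zero _
    (fun m ↦ traceLinearMap n 𝕜 𝕜 ∘ₗ LinearMap.mulLeft 𝕜 ((U m)ᴴ * U l)) ?_ fun i ↦ ?_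
  · exact fun m i hmi ↦ (hf m i).trans (horth hmi.symm)
  · rw [hf, ← star_eq_conjTranspose, mem_unitaryGroup_iff'.1 (hU i), trace_one]
    exact Nat.cast_ne_zero.2 Fintype.card_ne_zero

variable [Fintype ι] {S : Submodule 𝕜 (Matrix n n 𝕜)}

theorem span_conjTranspose_mul_eq [CharZero 𝕜] [Nonempty n]
    (hU : ∀ i, U i ∈ unitaryGroup n 𝕜) (horth : Pairwise fun i j ↦ trace ((U j)ᴴ * U i) = 0)
    (hS : S = span 𝕜 {X | ∃ i j, X = (U j)ᴴ * U i}) (hdim : Module.finrank 𝕜 S = Fintype.card ι)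
    (l : ι) : S = span 𝕜 (Set.range fun i ↦ (U l)ᴴ * U i) := by
  refine (eq_of_le_of_finrank_le ?_ ?_).symm
  · rw [hS]
    exact span_mono (Set.range_subset_iff.2 fun i ↦ ⟨i, l, rfl⟩)
  · rw [hdim, finrank_span_eq_card (linearIndependent_conjTranspose_mul hU horth l)]

theorem mul_mem_of_span_conjTranspose_mul_eq (hU : ∀ i, U i ∈ unitaryGroup n 𝕜)
    (hS : S = span 𝕜 {X | ∃ i j, X = (U j)ᴴ * U i})
    (hrow : ∀ l, S = span 𝕜 (Set.range fun i ↦ (U l)ᴴ * U i)) {A B : Matrix n n 𝕜}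
    (hA : A ∈ S) (hB : B ∈ S) : A * B ∈ S := by
  rw [hS] at hA
  induction hA using span_induction with
  | mem X hX =>
    obtain ⟨i, j, rfl⟩ := hX
    obtain ⟨c, rfl⟩ := (mem_span_range_iff_exists_fun 𝕜).1 (hrow i ▸ hB)
    rw [hrow j, Finset.mul_sum]
    refine sum_mem fun m _ ↦ ?_
    rw [mul_smul_comm, mul_conjTranspose_mul_of_mem_unitaryGroup (hU i)]
    exact smul_mem _ _ (subset_span ⟨m, rfl⟩)
  | zero => simp
  | add X Y _ _ hX hY => simpa [add_mul] using add_mem hX hY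
  | smul c X _ hX => simpa [smul_mul_assoc] using smul_mem _ c hX

end Field

section RCLike

open scoped ComplexOrder

variable {ι n 𝕜 : Type*} [Fintype n] [RCLike 𝕜]

theorem linearIndependent_of_pairwise_star_dotProduct_eq_zero {v : ι → n → 𝕜}
    (hv : ∀ i, v i ≠ 0) (horth : Pairwise fun i j ↦ star (v j) ⬝ᵥ v i = 0) :
    LinearIndependent 𝕜 v :=
  .of_pairwise_dual_eq_zero v (fun i ↦ dotProductBilin 𝕜 𝕜 (star (v i)))
    (fun i j hij ↦ horth hij.symm) (fun i ↦ by simpa [dotProduct_star_self_eq_zero] using hv i)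

variable [DecidableEq n] [Fintype ι] {U : ι → Matrix n n 𝕜}

theorem mulVec_ne_zero_of_mem_span_conjTranspose_mul (hU : ∀ i, U i ∈ unitaryGroup n 𝕜)
    {w : n → 𝕜} (hw : w ≠ 0) (horth : Pairwise fun i j ↦ star (U j *ᵥ w) ⬝ᵥ (U i *ᵥ w) = 0)
    (l : ι) {A : Matrix n n 𝕜} (hA : A ∈ span 𝕜 (Set.range fun i ↦ (U l)ᴴ * U i))
    (hA0 : A ≠ 0) : A *ᵥ w ≠ 0 := by
  have hUw (i : ι) : U i *ᵥ w ≠ 0 := fun h ↦ hw <| by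
    rw [← one_mulVec w, ← mem_unitaryGroup_iff'.1 (hU i), ← mulVec_mulVec, h, mulVec_zero]
  obtain ⟨c, rfl⟩ := (mem_span_range_iff_exists_fun 𝕜).1 hA
  intro hAw
  have hsum : ∑ i, c i • (U i *ᵥ w) = 0 := by
    rw [← mulVec_zero (U l), ← hAw, mulVec_mulVec, Finset.mul_sum, sum_mulVec]
    refine Finset.sum_congr rfl fun i _ ↦ ?_
    rw [mul_smul_comm, ← Matrix.mul_assoc, ← star_eq_conjTranspose,
      mem_unitaryGroup_iff.1 (hU l), Matrix.one_mul, smul_mulVec]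
  have hc := Fintype.linearIndependent_iff.1
    (linearIndependent_of_pairwise_star_dotProduct_eq_zero (v := (U · *ᵥ w)) hUw horth) c hsum
  exact hA0 (by simp [hc])

end RCLike

end Matrix

theorem stmt11_general (d r : ℕ) (U : Fin d → Matrix (Fin d) (Fin d) ℂ)
    (hU : ∀ i, U i ∈ Matrix.unitaryGroup (Fin d) ℂ)
    (horth : ∀ (i j : Fin d), i ≠ j → Matrix.trace ((U j)ᴴ * U i) = 0)
    (W : Matrix (Fin d) (Fin r) ℂ) (hWW : W * Wᴴ = 1)
    (hW : ∀ (i j : Fin d), i ≠ j → ∀ k : Fin r, (Wᴴ * (U j)ᴴ * U i * W) k k = 0)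
    (S : Submodule ℂ (Matrix (Fin d) (Fin d) ℂ))
    (hS : S = Submodule.span ℂ {X | ∃ i j : Fin d, X = (U j)ᴴ * U i})
    (hdim : Module.finrank ℂ S = d) :
    (∀ A ∈ S, ∀ B ∈ S, A * B ∈ S) ∧
    (∃ ψ : Fin d → ℂ, ∀ A ∈ S, A ≠ 0 → A.mulVec ψ ≠ 0) := by
  have hrow (l : Fin d) : S = span ℂ (Set.range fun i ↦ (U l)ᴴ * U i) :=
    have : Nonempty (Fin d) := ⟨l⟩
    span_conjTranspose_mul_eq hU (fun i j ↦ horth i j) hS (by simpa using hdim) l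
  refine ⟨fun A hA B hB ↦ mul_mem_of_span_conjTranspose_mul_eq hU hS hrow hA hB, ?_⟩
  rcases isEmpty_or_nonempty (Fin d) with hd | ⟨⟨l⟩⟩
  · exact ⟨0, fun A _ hA ↦ (hA (Subsingleton.elim A 0)).elim⟩
  have : Nonempty (Fin d) := ⟨l⟩
  have hW0 : Wᵀ ≠ 0 := fun h ↦ one_ne_zero (α := Matrix (Fin d) (Fin d) ℂ) <| by
    rw [← hWW, transpose_eq_zero.1 h, Matrix.zero_mul]
  obtain ⟨k, hk⟩ := Function.ne_iff.1 hW0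
  have hcol : Pairwise fun i j ↦ star (U j *ᵥ Wᵀ k) ⬝ᵥ (U i *ᵥ Wᵀ k) = 0 := fun i j hij ↦
    (conjTranspose_mul_conjTranspose_mul_mul_apply_self W (U j) (U i) k).symm.trans (hW i j hij k)
  exact ⟨Wᵀ k, fun A hA ↦ mulVec_ne_zero_of_mem_span_conjTranspose_mul hU hk hcol l (hrow l ▸ hA)⟩

theorem stmt11 (d r : ℕ) (hr : 0 < r) (U : Fin d → Matrix (Fin d) (Fin d) ℂ)
    (hU : ∀ i, U i ∈ Matrix.unitaryGroup (Fin d) ℂ)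
    (horth : ∀ (i j : Fin d), i ≠ j → Matrix.trace ((U j)ᴴ * U i) = 0)
    (W : Matrix (Fin d) (Fin r) ℂ) (hWW : W * Wᴴ = 1)
    (hW : ∀ (i j : Fin d), i ≠ j → ∀ k : Fin r, (Wᴴ * (U j)ᴴ * U i * W) k k = 0)
    (S : Submodule ℂ (Matrix (Fin d) (Fin d) ℂ))
    (hS : S = Submodule.span ℂ {X | ∃ i j : Fin d, X = (U j)ᴴ * U i})
    (hdim : Module.finrank ℂ S = d) :
    (∀ A ∈ S, ∀ B ∈ S, A * B ∈ S) ∧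
    (∃ ψ : Fin d → ℂ, ∀ A ∈ S, A ≠ 0 → A.mulVec ψ ≠ 0) :=
  stmt11_general d r U hU horth W hWW hW S hS hdim
end

section
/- Let r ≥ d, let W be a d×r complex matrix whose columns are generic (any d of the r columns of W are linearly independent), and let M_1, ..., M_n be d×d complex matrices such that Δ(W* M_l* M_k W) = 0 for all k ≠ l. Then ∑_{k=1}^n rank(M_k) ≤ d². -/
/-!
Let `w_j` be the columns of `W`. For a fixed column, the diagonal entries of the hypothesis say
that the vectors `M_k w_j` (`k = 1, …, n`) are pairwise orthogonal, so at most `d` of them are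
nonzero: at most `r d` pairs `(k, j)` have `M_k w_j ≠ 0`. For a fixed `k`, genericity puts at most
`d - rank M_k` columns into the proper subspace `ker M_k` (when `M_k ≠ 0`), so `M_k w_j ≠ 0` for at
least `r - d + rank M_k ≥ (r / d) rank M_k` columns, because `rank M_k ≤ d ≤ r`. Double counting
gives `r ∑ rank M_k ≤ r d²`.
-/

open Matrix

open Finset Module

def IsGeneric (K : Type*) {E ι : Type*} [Field K] [AddCommGroup E] [Module K E] (w : ι → E) :
    Prop :=
  ∀ s : Finset ι, #s ≤ finrank K E → LinearIndependent K (fun j : s => w j)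

section Generic

variable {K E ι : Type*} [Field K] [AddCommGroup E] [Module K E] {w : ι → E}

theorem isGeneric_of_forall_card_eq [Fintype ι] (hE : finrank K E ≤ Fintype.card ι)
    (hw : ∀ s : Finset ι, #s = finrank K E → LinearIndependent K (fun j : s => w j)) :
    IsGeneric K w := fun t ht ↦ by
  obtain ⟨s, hts, hs⟩ := exists_superset_card_eq ht hE
  exact LinearIndepOn.mono (hw s hs) (by exact_mod_cast hts)

theorem IsGeneric.card_le_finrank_of_forall_mem [FiniteDimensional K E] (hw : IsGeneric K w)
    {V : Submodule K E} (hV : V ≠ ⊤) {S : Finset ι} (hS : ∀ j ∈ S, w j ∈ V) :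
    #S ≤ finrank K V := by
  by_contra! h
  obtain ⟨t, hts, ht⟩ := exists_subset_card_eq h
  have hli := hw t (ht ▸ Submodule.finrank_lt hV)
  have hspan : Submodule.span K (Set.range fun j : t => w j) ≤ V := by
    rw [Submodule.span_le]
    rintro _ ⟨j, rfl⟩
    exact hS j (hts j.2)
  have := Submodule.finrank_mono hspan
  rw [finrank_span_eq_card hli, Fintype.card_coe, ht] at this
  omega

end Generic

theorem Matrix.card_mul_rank_le_mul_card_filter_mulVec_ne_zero {K m n ι : Type*} [Field K]
    [DecidableEq K] [Fintype m] [Fintype n] [Fintype ι] (M : Matrix m n K) {w : ι → n → K}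
    (hw : IsGeneric K w) (hn : Fintype.card n ≤ Fintype.card ι) :
    Fintype.card ι * M.rank ≤ Fintype.card n * #{j | M *ᵥ w j ≠ 0} := by
  have hrank : M.rank + finrank K (LinearMap.ker M.mulVecLin) = Fintype.card n := by
    have := LinearMap.finrank_range_add_finrank_ker M.mulVecLin
    rwa [finrank_fintype_fun_eq_card] at this
  by_cases hker : LinearMap.ker M.mulVecLin = ⊤
  · rw [hker, finrank_top, finrank_fintype_fun_eq_card] at hrank
    simp [show M.rank = 0 by omega]
  have hzero : #{j | M *ᵥ w j = 0} ≤ finrank K (LinearMap.ker M.mulVecLin) :=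
    hw.card_le_finrank_of_forall_mem hker fun j hj ↦ by simpa using (mem_filter.mp hj).2
  have hsplit := card_filter_add_card_filter_not (s := univ) (fun j ↦ M *ᵥ w j = 0)
  rw [card_univ] at hsplit
  have hle : M.rank ≤ Fintype.card n := M.rank_le_card_width
  -- `|ι| rank M ≤ |n| (|ι| - |n| + rank M)` is `(|ι| - |n|) (|n| - rank M) ≥ 0`
  nlinarith

theorem card_filter_ne_zero_le_of_pairwise_dotProduct_star {𝕜 m ι : Type*} [RCLike 𝕜]
    [DecidableEq 𝕜] [Fintype m] [Fintype ι] {v : ι → m → 𝕜}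
    (hv : Pairwise fun i j ↦ v j ⬝ᵥ star (v i) = 0) : #{i | v i ≠ 0} ≤ Fintype.card m := by
  let u : {i // i ∈ ({i | v i ≠ 0} : Finset ι)} → EuclideanSpace 𝕜 m := fun i ↦ WithLp.toLp 2 (v i)
  have hu : LinearIndependent 𝕜 u :=
    linearIndependent_of_ne_zero_of_inner_eq_zero
      (fun i ↦ by simpa [u] using (mem_filter.mp i.2).2)
      (fun i j hij ↦ hv (Subtype.coe_injective.ne hij))
  simpa only [Fintype.card_coe, finrank_euclideanSpace] using hu.fintype_card_le_finrank

theorem Matrix.conjTranspose_mul_apply_self {𝕜 m n : Type*} [RCLike 𝕜] [Fintype m]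
    (A B : Matrix m n 𝕜) (j : n) : (Aᴴ * B) j j = Bᵀ j ⬝ᵥ star (Aᵀ j) := by
  simp [mul_apply, dotProduct, mul_comm]

theorem Matrix.transpose_mul_apply {α l m n : Type*} [Fintype m] [NonUnitalNonAssocSemiring α]
    (A : Matrix l m α) (B : Matrix m n α) (j : n) : (A * B)ᵀ j = A *ᵥ Bᵀ j := rfl

theorem stmt16 (d r n : ℕ) (hrd : d ≤ r) (W : Matrix (Fin d) (Fin r) ℂ)
    (hgen : ∀ s : Finset (Fin r), s.card = d →
      LinearIndependent ℂ (fun j : s => (fun i => W i (j : Fin r)) : s → Fin d → ℂ))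
    (M : Fin n → Matrix (Fin d) (Fin d) ℂ)
    (horth : ∀ (k l : Fin n), k ≠ l → delta (Wᴴ * (M l)ᴴ * M k * W) = 0) :
    ∑ k, (M k).rank ≤ d ^ 2 := by
  classical
  have hW : IsGeneric ℂ Wᵀ :=
    isGeneric_of_forall_card_eq (by simpa using hrd) fun s hs ↦ hgen s (by simpa using hs)
  have hcol (j : Fin r) : #{k | M k *ᵥ Wᵀ j ≠ 0} ≤ d := by
    refine (card_filter_ne_zero_le_of_pairwise_dotProduct_star fun k l hkl ↦ ?_).trans_eq
      (Fintype.card_fin d)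
    have hkl := congrFun₂ (horth l k hkl.symm) j j
    rwa [delta, diagonal_apply_eq, Matrix.mul_assoc _ (M l), ← conjTranspose_mul,
      conjTranspose_mul_apply_self, transpose_mul_apply, transpose_mul_apply] at hkl
  have hrow (k : Fin n) : r * (M k).rank ≤ d * #{j | M k *ᵥ Wᵀ j ≠ 0} := by
    simpa using (M k).card_mul_rank_le_mul_card_filter_mulVec_ne_zero hW (by simpa using hrd)
  have hcount : r * ∑ k, (M k).rank ≤ r * d ^ 2 :=
    calc r * ∑ k, (M k).rank ≤ ∑ k, d * #{j | M k *ᵥ Wᵀ j ≠ 0} := by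
          rw [mul_sum]; exact sum_le_sum fun k _ ↦ hrow k
      _ = d * ∑ j, #{k | M k *ᵥ Wᵀ j ≠ 0} := by
          rw [← mul_sum]
          exact congrArg (d * ·)
            (sum_card_bipartiteAbove_eq_sum_card_bipartiteBelow fun k j ↦ M k *ᵥ Wᵀ j ≠ 0)
      _ ≤ d * ∑ _j : Fin r, d := by gcongr with j; exact hcol j
      _ = r * d ^ 2 := by
          simp only [sum_const, card_univ, Fintype.card_fin, smul_eq_mul]; ring
  obtain rfl | hr := r.eq_zero_or_pos
  · obtain rfl : d = 0 := by omega
    simp [fun k ↦ Nat.le_zero.mp (M k).rank_le_height]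
  exact Nat.le_of_mul_le_mul_left hcount hr
end
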